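/- Let G be a connected non-bipartite graph and n ≥ 4 an even integer. Then κ(G × C_n) = min{(n/2)·κ(G × K_2), 2·δ(G)}. -/

import Mathlib

open SimpleGraph

universe u v

variable {α : Type u} {β : Type v}

/-- Direct (tensor) product of two simple graphs. -/
def SimpleGraph.tensorProd (G : SimpleGraph α) (H : SimpleGraph β) :
    SimpleGraph (α × β) where
  Adj x y := G.Adj x.1 y.1 ∧ H.Adj x.2 y.2
  symm := ⟨fun x y h => ⟨h.1.symm, h.2.symm⟩⟩
  loopless := ⟨fun x h => G.loopless.irrefl x.1 h.1⟩

/-- Direct (tensor) product of a family of simple graphs. -/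
def SimpleGraph.piTensorProd {ι : Type*} {V : ι → Type*}
    (G : ∀ i, SimpleGraph (V i)) : SimpleGraph (∀ i, V i) where
  Adj f g := f ≠ g ∧ ∀ i, (G i).Adj (f i) (g i)
  symm := ⟨fun f g h => ⟨h.1.symm, fun i => (h.2 i).symm⟩⟩
  loopless := ⟨fun f h => h.1 rfl⟩

/-- `S` is a vertex cut of `G`: deleting `S` leaves a disconnected graph. -/
def SimpleGraph.IsVertexCut (G : SimpleGraph α) (S : Set α) : Prop :=
  ¬ (G.induce Sᶜ).Connected

/-- Vertex connectivity: minimum size of a set `S` such that `G - S` is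
disconnected or has at most one vertex. -/
noncomputable def SimpleGraph.vConn (G : SimpleGraph α) : ℕ :=
  sInf {n | ∃ S : Set α, S.ncard = n ∧
    (G.IsVertexCut S ∨ Nat.card α ≤ n + 1)}

/-- Minimum degree (via neighbor set cardinalities). -/
noncomputable def SimpleGraph.minDeg (G : SimpleGraph α) : ℕ :=
  sInf {d | ∃ v, (G.neighborSet v).ncard = d}

/-- A minimum vertex cut. -/
def SimpleGraph.IsMinVertexCut (G : SimpleGraph α) (S : Set α) : Prop :=
  G.IsVertexCut S ∧ S.ncard = G.vConn

/-- `G` is super connected: every minimum vertex cut is the neighborhood of a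
vertex of minimum degree. -/
def SimpleGraph.SuperConnected (G : SimpleGraph α) : Prop :=
  ∀ S : Set α, G.IsMinVertexCut S →
    ∃ v, (G.neighborSet v).ncard = G.minDeg ∧ S = G.neighborSet v

/-- `(X, Y)` is a bipartition of `G`. -/
def SimpleGraph.IsBipartition (G : SimpleGraph α) (X Y : Set α) : Prop :=
  Disjoint X Y ∧ X ∪ Y = Set.univ ∧
    ∀ u v, G.Adj u v → (u ∈ X ∧ v ∈ Y) ∨ (u ∈ Y ∧ v ∈ X)

/-- The graph `G̃ₙ`: vertex set `α × ZMod n`, with for each `i` a copy `Hᵢ`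
of `G` on `(Xᵢ, Yᵢ)` and a copy `Hᵢ'` of `G` on `(Xᵢ₊₁, Yᵢ)`. -/
def tildeG (G : SimpleGraph α) (X Y : Set α) (n : ℕ) :
    SimpleGraph (α × ZMod n) where
  Adj a b := G.Adj a.1 b.1 ∧
    ((a.1 ∈ X ∧ b.1 ∈ Y ∧ (a.2 = b.2 ∨ a.2 = b.2 + 1)) ∨
     (a.1 ∈ Y ∧ b.1 ∈ X ∧ (b.2 = a.2 ∨ b.2 = a.2 + 1)))
  symm := ⟨fun a b h => ⟨h.1.symm, by tauto⟩⟩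
  loopless := ⟨fun a h => G.loopless.irrefl a.1 h.1⟩

/-!
Two cuts give the upper bound. The neighbourhood of a vertex `(v, 0)` with `deg v = δ(G)` has
`2δ(G)` vertices. A minimum cut of `G × K₂`, pulled back along `id × c` for a proper
2-colouring `c` of `Cₙ` (a surjective homomorphism `G × Cₙ → G × K₂`), is a cut with
`(n/2)·κ(G × K₂)` vertices.

For the lower bound let `S` be a cut, `A` a union of components of `(G × Cₙ) - S` and `B` the
rest. The layers `j` and `j + 1` span a copy of `G × K₂`. If `A` and `B` both meet every such
pair of layers, `S` cuts every copy, and summing over `j` gives `2|S| ≥ n·κ(G × K₂)`. Otherwise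
one side misses two consecutive layers; the layers it meets then form arcs of `Cₙ` with two
distinct layers just outside them, and each of these contains a whole neighbourhood of a vertex
of that side, so `|S| ≥ 2δ(G)`.
-/

namespace SimpleGraph

variable {V W W' : Type*}

section VertexCut

variable {Γ : SimpleGraph V} {S A : Set V}

lemma isVertexCut_of_closed {x y : V} (hxS : x ∉ S) (hx : x ∈ A) (hyS : y ∉ S) (hy : y ∉ A)
    (hA : ∀ a ∈ A, ∀ b ∉ S, Γ.Adj a b → b ∈ A) : Γ.IsVertexCut S := by
  intro hconn
  obtain ⟨p⟩ := hconn.preconnected (⟨x, hxS⟩ : ↥Sᶜ) ⟨y, hyS⟩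
  obtain ⟨d, -, hd₁, hd₂⟩ := p.exists_boundary_dart (Subtype.val ⁻¹' A) hx hy
  exact hd₂ (hA _ hd₁ _ d.snd.2 d.adj)

lemma exists_closed_of_isVertexCut (h : Γ.IsVertexCut S) (hS : Sᶜ.Nonempty) :
    ∃ A ⊆ Sᶜ, A.Nonempty ∧ (Sᶜ \ A).Nonempty ∧ ∀ a ∈ A, ∀ b ∉ S, Γ.Adj a b → b ∈ A := by
  have : Nonempty ↥Sᶜ := hS.to_subtype
  obtain ⟨x, y, hxy⟩ : ∃ x y : ↥Sᶜ, ¬ (Γ.induce Sᶜ).Reachable x y := by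
    by_contra! h'
    exact h ⟨h'⟩
  refine ⟨{z | ∃ hz : z ∉ S, (Γ.induce Sᶜ).Reachable x ⟨z, hz⟩}, fun z hz => hz.1,
    ⟨x, x.2, .rfl⟩, ⟨y, y.2, fun ⟨_, hy⟩ => hxy hy⟩, ?_⟩
  rintro a ⟨ha, hxa⟩ b hb hab
  exact ⟨hb, hxa.trans (Adj.reachable (G := Γ.induce Sᶜ) hab)⟩

lemma closed_compl_diff (hA : ∀ a ∈ A, ∀ b ∉ S, Γ.Adj a b → b ∈ A) :
    ∀ a ∈ Sᶜ \ A, ∀ b ∉ S, Γ.Adj a b → b ∈ Sᶜ \ A :=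
  fun a ha b hb hab => ⟨hb, fun hbA => ha.2 (hA b hbA a ha.1 hab.symm)⟩

lemma isVertexCut_preimage_of_closed {Γ' : SimpleGraph W} (f : Γ' →g Γ)
    (hA : ∀ a ∈ A, ∀ b ∉ S, Γ.Adj a b → b ∈ A) {x y : W} (hxS : f x ∉ S) (hx : f x ∈ A)
    (hyS : f y ∉ S) (hy : f y ∉ A) : Γ'.IsVertexCut (f ⁻¹' S) :=
  isVertexCut_of_closed (A := f ⁻¹' A) hxS hx hyS hy
    fun _ ha _ hb hab => hA _ ha _ hb (f.map_adj hab)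

lemma IsVertexCut.preimage {Γ' : SimpleGraph W} {T : Set W} (f : Γ →g Γ')
    (hf : Function.Surjective f) (h : Γ'.IsVertexCut T) : Γ.IsVertexCut (f ⁻¹' T) := by
  refine fun hconn => h (hconn.map (induceHom f fun _ hx => hx) ?_)
  rintro ⟨y, hy⟩
  obtain ⟨x, rfl⟩ := hf y
  exact ⟨⟨x, hy⟩, rfl⟩

end VertexCut

section Connectivity

variable (Γ : SimpleGraph V)

lemma vConn_le_ncard {S : Set V} (h : Γ.IsVertexCut S) : Γ.vConn ≤ S.ncard :=
  Nat.sInf_le ⟨S, rfl, Or.inl h⟩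

lemma vConn_eq_zero_of_natCard_le_one (h : Nat.card V ≤ 1) : Γ.vConn = 0 :=
  Nat.sInf_eq_zero.mpr (Or.inl ⟨∅, Set.ncard_empty V, Or.inr h⟩)

lemma le_vConn {m : ℕ}
    (h : ∀ S : Set V, Γ.IsVertexCut S ∨ Nat.card V ≤ S.ncard + 1 → m ≤ S.ncard) :
    m ≤ Γ.vConn :=
  le_csInf ⟨_, Set.univ, rfl, Or.inr (by simp)⟩ fun _ ⟨S, hS, hcut⟩ => hS ▸ h S (hS ▸ hcut)

lemma exists_isMinVertexCut (h : Γ.vConn + 1 < Nat.card V) : ∃ T, Γ.IsMinVertexCut T := by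
  obtain ⟨T, hT, hcut⟩ := Nat.sInf_mem (s := {n | ∃ S : Set V, S.ncard = n ∧
    (Γ.IsVertexCut S ∨ Nat.card V ≤ n + 1)}) ⟨_, Set.univ, rfl, Or.inr (by simp)⟩
  exact ⟨T, hcut.resolve_right (by rw [← vConn] at *; omega), hT⟩

lemma vConn_le_ncard_neighborSet (x : V) : Γ.vConn ≤ (Γ.neighborSet x).ncard := by
  by_cases h : ∃ y, y ≠ x ∧ y ∉ Γ.neighborSet x
  · obtain ⟨y, hyx, hy⟩ := h
    refine Γ.vConn_le_ncard (isVertexCut_of_closed (A := {x}) (Γ.loopless.irrefl x) rfl hy hyx ?_)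
    rintro a rfl b hb hab
    exact absurd hab hb
  · push Not at h
    have hx : insert x (Γ.neighborSet x) = Set.univ :=
      Set.eq_univ_of_forall fun y => (eq_or_ne y x).imp id (h y)
    refine Nat.sInf_le ⟨_, rfl, Or.inr ?_⟩
    calc Nat.card V = (insert x (Γ.neighborSet x)).ncard := by rw [hx, Set.ncard_univ]
      _ ≤ (Γ.neighborSet x).ncard + 1 := Set.ncard_insert_le _ _

lemma minDeg_le_ncard_neighborSet (v : V) : Γ.minDeg ≤ (Γ.neighborSet v).ncard :=
  Nat.sInf_le ⟨v, rfl⟩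

lemma exists_ncard_neighborSet_eq_minDeg [Nonempty V] :
    ∃ v, (Γ.neighborSet v).ncard = Γ.minDeg :=
  Nat.sInf_mem (s := {d | ∃ v, (Γ.neighborSet v).ncard = d}) ⟨_, Classical.arbitrary V, rfl⟩

lemma minDeg_lt_natCard [Finite V] [Nonempty V] : Γ.minDeg < Nat.card V := by
  let v := Classical.arbitrary V
  refine (Γ.minDeg_le_ncard_neighborSet v).trans_lt (Set.ncard_lt_card fun h => ?_)
  exact Γ.loopless.irrefl v (h ▸ Set.mem_univ v : v ∈ Γ.neighborSet v)

end Connectivity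

section Slices

lemma ncard_eq_sum_ncard_slice [Finite V] [Fintype W] (S : Set (V × W)) :
    S.ncard = ∑ w, ((·, w) ⁻¹' S).ncard := by
  let e : ↥S ≃ Σ w, ↥((·, w) ⁻¹' S) :=
    { toFun p := ⟨p.1.2, p.1.1, p.2⟩
      invFun q := ⟨(q.2.1, q.1), q.2.2⟩
      left_inv _ := rfl
      right_inv _ := rfl }
  simp only [← Nat.card_coe_set_eq, Nat.card_congr e, Nat.card_sigma]

lemma ncard_slice_add_ncard_slice_le [Finite V] [Fintype W] (S : Set (V × W)) {w₁ w₂ : W}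
    (h : w₁ ≠ w₂) : ((·, w₁) ⁻¹' S).ncard + ((·, w₂) ⁻¹' S).ncard ≤ S.ncard := by
  classical
  rw [ncard_eq_sum_ncard_slice S, ← Finset.sum_pair (f := fun w => ((·, w) ⁻¹' S).ncard) h]
  exact Finset.sum_le_sum_of_subset (Finset.subset_univ _)

lemma sum_ncard_slice_add_one [Finite V] {n : ℕ} [NeZero n] (S : Set (V × Fin n)) :
    ∑ j, (((·, j) ⁻¹' S).ncard + ((·, j + 1) ⁻¹' S).ncard) = 2 * S.ncard := by
  rw [Finset.sum_add_distrib, ← ncard_eq_sum_ncard_slice, two_mul,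
    ncard_eq_sum_ncard_slice S, ← Equiv.sum_comp (Equiv.addRight 1)]
  rfl

end Slices

section Cycle

variable {n : ℕ}

lemma cycleGraph_adj_add_one [NeZero n] (hn : 2 ≤ n) (u : Fin n) :
    (cycleGraph n).Adj u (u + 1) := by
  rw [cycleGraph_adj', add_sub_cancel_left, Fin.val_one', Nat.mod_eq_of_lt hn]
  exact Or.inr rfl

lemma ncard_neighborSet_cycleGraph (hn : 3 ≤ n) (u : Fin n) :
    ((cycleGraph n).neighborSet u).ncard = 2 := by
  obtain ⟨k, rfl⟩ : ∃ k, n = k + 3 := ⟨n - 3, by omega⟩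
  rw [Set.ncard_eq_toFinset_card', Set.toFinset_card, card_neighborSet_eq_degree,
    cycleGraph_degree_three_le]

lemma exists_boundary_of_zero_notMem_of_neg_one_notMem [NeZero n] {P : Set (Fin n)}
    (hP : P.Nonempty) (h₀ : 0 ∉ P) (h₁ : -1 ∉ P) :
    ∃ a ∈ P, ∃ b ∈ P, a - 1 ∉ P ∧ b + 1 ∉ P ∧ a - 1 ≠ b + 1 := by
  classical
  obtain ⟨k, rfl⟩ := Nat.exists_eq_succ_of_ne_zero (NeZero.ne n)
  have hs : P.toFinset.Nonempty := Set.toFinset_nonempty.mpr hP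
  set a := P.toFinset.min' hs
  set b := P.toFinset.max' hs
  have ha : a ∈ P := Set.mem_toFinset.mp (P.toFinset.min'_mem hs)
  have hb : b ∈ P := Set.mem_toFinset.mp (P.toFinset.max'_mem hs)
  have ha' : a - 1 < a := Fin.sub_one_lt_iff.mpr (Fin.pos_of_ne_zero fun h => h₀ (h ▸ ha))
  have hb' : b < b + 1 := by
    refine Fin.lt_add_one_iff.mpr (lt_of_le_of_ne (Fin.le_last b) fun h => h₁ ?_)
    rwa [← eq_neg_of_add_eq_zero_left (Fin.last_add_one k), ← h]
  refine ⟨a, ha, b, hb, fun h => ?_, fun h => ?_, ?_⟩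
  · exact ha'.not_ge (P.toFinset.min'_le _ (Set.mem_toFinset.mpr h))
  · exact hb'.not_ge (P.toFinset.le_max' _ (Set.mem_toFinset.mpr h))
  · exact ((ha'.trans_le (P.toFinset.min'_le _ (Set.mem_toFinset.mpr hb))).trans hb').ne

lemma exists_boundary_of_notMem_of_add_one_notMem [NeZero n] {P : Set (Fin n)}
    (hP : P.Nonempty) {i : Fin n} (hi : i ∉ P) (hi' : i + 1 ∉ P) :
    ∃ a ∈ P, ∃ b ∈ P, a - 1 ∉ P ∧ b + 1 ∉ P ∧ a - 1 ≠ b + 1 := by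
  obtain ⟨x, hx⟩ := hP
  obtain ⟨a, ha, b, hb, ha', hb', hab⟩ :=
    exists_boundary_of_zero_notMem_of_neg_one_notMem (P := (· + (i + 1)) ⁻¹' P)
      ⟨x - (i + 1), by simpa using hx⟩ (by simpa using hi') (by simpa using hi)
  refine ⟨a + (i + 1), ha, b + (i + 1), hb, ?_, ?_, ?_⟩
  · rwa [add_sub_right_comm]
  · rwa [add_right_comm]
  · rwa [add_sub_right_comm, add_right_comm, Ne, add_left_inj]

lemma Coloring.cycleGraph_apply_add_one [NeZero n] (hn : 2 ≤ n)
    (c : (cycleGraph n).Coloring (Fin 2)) (j : Fin n) : c (j + 1) = c j + 1 := by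
  have := c.valid (cycleGraph_adj_add_one hn j)
  omega

lemma Coloring.surjective_of_cycleGraph [NeZero n] (hn : 2 ≤ n)
    (c : (cycleGraph n).Coloring (Fin 2)) : Function.Surjective c := by
  intro ε
  by_cases h : c 0 = ε
  · exact ⟨0, h⟩
  · exact ⟨1, by rw [← zero_add 1, c.cycleGraph_apply_add_one hn]; omega⟩

end Cycle

section TensorProd

variable (G : SimpleGraph V) {H : SimpleGraph W} {H' : SimpleGraph W'}

lemma neighborSet_tensorProd (v : V) (w : W) :
    (G.tensorProd H).neighborSet (v, w) = G.neighborSet v ×ˢ H.neighborSet w := rfl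

def Hom.tensorProdRight (f : H →g H') : G.tensorProd H →g G.tensorProd H' where
  toFun := Prod.map id f
  map_rel' h := ⟨h.1, f.map_rel h.2⟩

def Hom.ofAdj {u w : W} (h : H.Adj u w) : (⊤ : SimpleGraph (Fin 2)) →g H where
  toFun := ![u, w]
  map_rel' {a b} hab := by fin_cases a <;> fin_cases b <;> simp_all [h.symm]

lemma vConn_tensorProd_cycleGraph_le_two_mul_minDeg [Nonempty V] {n : ℕ} (hn : 3 ≤ n) :
    (G.tensorProd (cycleGraph n)).vConn ≤ 2 * G.minDeg := by
  obtain ⟨v, hv⟩ := G.exists_ncard_neighborSet_eq_minDeg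
  have := (G.tensorProd (cycleGraph n)).vConn_le_ncard_neighborSet (v, ⟨0, by omega⟩)
  rwa [neighborSet_tensorProd, Set.ncard_prod, hv, ncard_neighborSet_cycleGraph hn,
    mul_comm] at this

end TensorProd

section CycleProduct

variable [Finite V] (G : SimpleGraph V) {n : ℕ}

lemma two_mul_ncard_preimage_coloring [NeZero n] (hn : 2 ≤ n)
    (c : (cycleGraph n).Coloring (Fin 2)) (T : Set (V × Fin 2)) :
    2 * (Prod.map id c ⁻¹' T).ncard = n * T.ncard := by
  have hc := c.cycleGraph_apply_add_one hn
  have hT : ∀ ε : Fin 2, ((·, ε) ⁻¹' T).ncard + ((·, ε + 1) ⁻¹' T).ncard = T.ncard := by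
    intro ε
    rw [ncard_eq_sum_ncard_slice T, Fin.sum_univ_two]
    fin_cases ε <;> simp [add_comm]
  -- the slices of the preimage at `j` and `j + 1` are the two slices of `T`
  rw [← sum_ncard_slice_add_one]
  simp only [Set.preimage_preimage, Prod.map_apply, id, hc, hT, Finset.sum_const,
    Finset.card_univ, Fintype.card_fin, smul_eq_mul]

lemma vConn_tensorProd_top_le_ncard_slice_add [NeZero n] (hn : 2 ≤ n) {S A : Set (V × Fin n)}
    (hA : ∀ a ∈ A, ∀ b ∉ S, (G.tensorProd (cycleGraph n)).Adj a b → b ∈ A) {j : Fin n}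
    {p q : V × Fin n} (hpS : p ∉ S) (hp : p ∈ A) (hpj : p.2 = j ∨ p.2 = j + 1)
    (hqS : q ∉ S) (hq : q ∉ A) (hqj : q.2 = j ∨ q.2 = j + 1) :
    (G.tensorProd (⊤ : SimpleGraph (Fin 2))).vConn ≤
      ((·, j) ⁻¹' S).ncard + ((·, j + 1) ⁻¹' S).ncard := by
  let f := Hom.tensorProdRight G (Hom.ofAdj (cycleGraph_adj_add_one hn j))
  have hf : ∀ r : V × Fin n, r.2 = j ∨ r.2 = j + 1 → ∃ x, f x = r := by
    rintro ⟨v, _⟩ (rfl | rfl)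
    exacts [⟨(v, 0), rfl⟩, ⟨(v, 1), rfl⟩]
  obtain ⟨x, rfl⟩ := hf p hpj
  obtain ⟨y, rfl⟩ := hf q hqj
  refine (vConn_le_ncard _ (isVertexCut_preimage_of_closed f hA hpS hp hqS hq)).trans_eq ?_
  rw [ncard_eq_sum_ncard_slice, Fin.sum_univ_two]
  rfl

lemma two_mul_minDeg_le_ncard [NeZero n] (hn : 2 ≤ n) {S C : Set (V × Fin n)}
    (hC : ∀ a ∈ C, ∀ b ∉ S, (G.tensorProd (cycleGraph n)).Adj a b → b ∈ C) (hne : C.Nonempty)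
    {i : Fin n} (hi : ∀ p ∈ C, p.2 ≠ i ∧ p.2 ≠ i + 1) : 2 * G.minDeg ≤ S.ncard := by
  have hcharge : ∀ v j c, (v, j) ∈ C → (cycleGraph n).Adj j c → c ∉ Prod.snd '' C →
      G.neighborSet v ⊆ (·, c) ⁻¹' S := fun v j c hv hjc hc w hw => by
    by_contra hwS
    exact hc ⟨_, hC _ hv _ hwS ⟨hw, hjc⟩, rfl⟩
  obtain ⟨_, ⟨⟨v, a⟩, hv, rfl⟩, _, ⟨⟨w, b⟩, hw, rfl⟩, ha, hb, hab⟩ :=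
    exists_boundary_of_notMem_of_add_one_notMem (hne.image Prod.snd)
      (fun ⟨p, hp, h⟩ => (hi p hp).1 h) (fun ⟨p, hp, h⟩ => (hi p hp).2 h)
  have hva := (cycleGraph_adj_add_one hn (a - 1)).symm
  rw [sub_add_cancel] at hva
  calc 2 * G.minDeg ≤ (G.neighborSet v).ncard + (G.neighborSet w).ncard := by
        have := G.minDeg_le_ncard_neighborSet v
        have := G.minDeg_le_ncard_neighborSet w
        omega
    _ ≤ ((·, a - 1) ⁻¹' S).ncard + ((·, b + 1) ⁻¹' S).ncard :=
        add_le_add (Set.ncard_le_ncard (hcharge v a _ hv hva ha) (Set.toFinite _))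
          (Set.ncard_le_ncard (hcharge w b _ hw (cycleGraph_adj_add_one hn b) hb) (Set.toFinite _))
    _ ≤ S.ncard := ncard_slice_add_ncard_slice_le S hab

lemma vConn_tensorProd_cycleGraph_le_of_lt [Nonempty V] (hn : 2 ≤ n) (heven : Even n)
    (h : n / 2 * (G.tensorProd (⊤ : SimpleGraph (Fin 2))).vConn < 2 * G.minDeg) :
    (G.tensorProd (cycleGraph n)).vConn ≤
      n / 2 * (G.tensorProd (⊤ : SimpleGraph (Fin 2))).vConn := by
  have : NeZero n := ⟨by omega⟩
  obtain ⟨T, hT, hTκ⟩ := (G.tensorProd (⊤ : SimpleGraph (Fin 2))).exists_isMinVertexCut (by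
    have := Nat.le_mul_of_pos_left (G.tensorProd (⊤ : SimpleGraph (Fin 2))).vConn
      (show 0 < n / 2 by omega)
    have := G.minDeg_lt_natCard
    rw [Nat.card_prod, Nat.card_fin]
    omega)
  let c := recolorOfEquiv _ finTwoEquiv.symm (cycleGraph.bicoloring_of_even n heven)
  have hcut := hT.preimage (Hom.tensorProdRight G c)
    (Function.surjective_id.prodMap (c.surjective_of_cycleGraph hn))
  refine (vConn_le_ncard _ hcut).trans_eq ?_
  change (Prod.map id c ⁻¹' T).ncard = _
  have hS := two_mul_ncard_preimage_coloring hn c T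
  rw [← hTκ]
  obtain ⟨k, rfl⟩ := heven.two_dvd
  rw [Nat.mul_div_cancel_left k two_pos]
  linarith

lemma div_two_mul_vConn_le_ncard [NeZero n] (hn : 2 ≤ n) {S A : Set (V × Fin n)}
    (hAS : A ⊆ Sᶜ) (hA : ∀ a ∈ A, ∀ b ∉ S, (G.tensorProd (cycleGraph n)).Adj a b → b ∈ A)
    (hmeet : ∀ j : Fin n, (∃ p ∈ A, p.2 = j ∨ p.2 = j + 1) ∧
      ∃ q ∈ Sᶜ \ A, q.2 = j ∨ q.2 = j + 1) :
    n / 2 * (G.tensorProd (⊤ : SimpleGraph (Fin 2))).vConn ≤ S.ncard := by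
  have hsum : n * (G.tensorProd (⊤ : SimpleGraph (Fin 2))).vConn ≤ 2 * S.ncard := by
    rw [← sum_ncard_slice_add_one]
    calc n * (G.tensorProd (⊤ : SimpleGraph (Fin 2))).vConn
        = ∑ _j : Fin n, (G.tensorProd (⊤ : SimpleGraph (Fin 2))).vConn := by simp
      _ ≤ _ := Finset.sum_le_sum fun j _ => by
        obtain ⟨⟨p, hp, hpj⟩, ⟨q, ⟨hqS, hq⟩, hqj⟩⟩ := hmeet j
        exact G.vConn_tensorProd_top_le_ncard_slice_add hn hA (hAS hp) hp hpj hqS hq hqj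
  have := Nat.div_mul_le_self n 2
  nlinarith

lemma min_le_ncard_of_isVertexCut_or_natCard_le [Nonempty V] (hn : 2 ≤ n) {S : Set (V × Fin n)}
    (hS : (G.tensorProd (cycleGraph n)).IsVertexCut S ∨ Nat.card (V × Fin n) ≤ S.ncard + 1) :
    min (n / 2 * (G.tensorProd (⊤ : SimpleGraph (Fin 2))).vConn) (2 * G.minDeg) ≤ S.ncard := by
  have : NeZero n := ⟨by omega⟩
  by_cases hcard : Nat.card (V × Fin n) ≤ S.ncard + 1
  · refine min_le_of_right_le ?_
    have := G.minDeg_lt_natCard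
    rw [Nat.card_prod, Nat.card_fin] at hcard
    nlinarith
  have hSc : Sᶜ.Nonempty := by
    refine Set.nonempty_compl.mpr fun h => hcard ?_
    simp [h]
  obtain ⟨A, hAS, hA, hB, hAcl⟩ := exists_closed_of_isVertexCut (hS.resolve_right hcard) hSc
  by_cases hmeet : ∀ j : Fin n, (∃ p ∈ A, p.2 = j ∨ p.2 = j + 1) ∧
      ∃ q ∈ Sᶜ \ A, q.2 = j ∨ q.2 = j + 1
  · exact min_le_of_left_le (G.div_two_mul_vConn_le_ncard hn hAS hAcl hmeet)
  refine min_le_of_right_le ?_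
  push Not at hmeet
  obtain ⟨j, hj⟩ := hmeet
  by_cases hAj : ∃ p ∈ A, p.2 = j ∨ p.2 = j + 1
  · exact G.two_mul_minDeg_le_ncard hn (closed_compl_diff hAcl) hB (hj hAj)
  · push Not at hAj
    exact G.two_mul_minDeg_le_ncard hn hAcl hA hAj

end CycleProduct

end SimpleGraph

theorem stmt_9_general (G : SimpleGraph α) (n : ℕ) (hn : 4 ≤ n) (heven : Even n) :
    (G.tensorProd (cycleGraph n)).vConn =
      min ((n / 2) * (G.tensorProd (⊤ : SimpleGraph (Fin 2))).vConn)
        (2 * G.minDeg) := by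
  -- `Nat.card α = 0` also covers infinite `α`; both connectivities are then `0`.
  rcases Nat.eq_zero_or_pos (Nat.card α) with hα | hα
  · rw [vConn_eq_zero_of_natCard_le_one _ (by simp [Nat.card_prod, hα]),
      vConn_eq_zero_of_natCard_le_one _ (by simp [Nat.card_prod, hα])]
    simp
  have ⟨_, _⟩ := Nat.card_pos_iff.mp hα
  refine le_antisymm ?_
    (le_vConn _ fun S hS => G.min_le_ncard_of_isVertexCut_or_natCard_le (by omega) hS)
  rcases lt_or_ge (n / 2 * (G.tensorProd (⊤ : SimpleGraph (Fin 2))).vConn) (2 * G.minDeg)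
    with h | h
  · exact (G.vConn_tensorProd_cycleGraph_le_of_lt (by omega) heven h).trans_eq
      (min_eq_left h.le).symm
  · exact (G.vConn_tensorProd_cycleGraph_le_two_mul_minDeg (by omega)).trans_eq
      (min_eq_right h).symm

/-- For a connected non-bipartite graph G and even n ≥ 4,
κ(G × Cₙ) = min{(n/2)·κ(G × K₂), 2·δ(G)}. -/
theorem stmt_9 (G : SimpleGraph α) (hGc : G.Connected) (hGb : ¬ G.Colorable 2)
    (n : ℕ) (hn : 4 ≤ n) (heven : Even n) :
    (G.tensorProd (cycleGraph n)).vConn =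
      min ((n / 2) * (G.tensorProd (⊤ : SimpleGraph (Fin 2))).vConn)
        (2 * G.minDeg) :=
  stmt_9_general G n hn heven
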